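/- Let π = (π_h)_{h=1}^H be a deterministic policy. Then for every h ∈ {1,…,H+1} and every observable history f_h, ∑_{o_{h+1},…,o_{H+1} ∈ O} (∏_{t=h+1}^{H+1} O'(o_t)) · ∑_{s ∈ S} σ_{H+1}(s; f_{H+1}) = ∑_{s ∈ S} σ_h(s; f_h) · β^π_h(s; f_h), where f_{H+1} is the history generated from f_h, π and the observations. Consequently the value function V^π_h(f_h) := (1/γ)·ln of the left-hand side satisfies V^π_h(f_h) = (1/γ)·ln ⟨σ_h(·;f_h), β^π_h(·;f_h)⟩. -/

import Mathlib

open Finset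

noncomputable section

variable {S O A : Type*}

/-- Truncation of a sequence: keep the first `n` values, fill the rest with junk. -/
def truncSeq {X : Type*} [Nonempty X] (f : ℕ → X) (n : ℕ) : ℕ → X :=
  fun t => if t < n then f t else Classical.arbitrary X

/-- Action sequence generated by a policy `π` from observations `obs`, keeping the
prescribed actions `acts` at indices `< n₀`.  At step `n`, the policy only sees the
actions at indices `< n` and the observations at indices `< n`. -/
def genAct [Nonempty A] [Nonempty O] (π : ℕ → (ℕ → A) → (ℕ → O) → A)
    (acts : ℕ → A) (obs : ℕ → O) (n₀ : ℕ) : ℕ → A :=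
  fun n => Nat.strongRecOn n (fun n ih =>
    if n < n₀ then acts n
    else π n (fun t => if ht : t < n then ih t ht else Classical.arbitrary A)
             (fun t => if t < n then obs t else Classical.arbitrary O))

/-- Splicing a tail of `k` observations after the first `m` observations of `obs`. -/
def splice [Nonempty O] (obs : ℕ → O) (m : ℕ) {k : ℕ} (tail : Fin k → O) : ℕ → O :=
  fun t => if t < m then obs t
    else if h : t - m < k then tail ⟨t - m, h⟩ else Classical.arbitrary O

/-- The (unnormalized) risk belief `σ_{n+1}(s; f_{n+1})` (paper index `h = n+1`). -/
def riskBelief [Fintype S] (μ : S → ℝ) (Ttr : ℕ → A → S → S → ℝ)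
    (Oem : ℕ → O → S → ℝ) (Oref : O → ℝ) (rew : ℕ → S → A → ℝ) (γ : ℝ)
    (n : ℕ) (acts : ℕ → A) (obs : ℕ → O) (s : S) : ℝ :=
  ∑ p : Fin n → S,
    let q : Fin (n + 1) → S := Fin.snoc p s
    (μ (q 0) * ∏ t : Fin n, Ttr t (acts t) (q t.castSucc) (q t.succ)) *
      ((∏ t : Fin n, (Oem t (obs t) (q t.succ) / Oref (obs t))) *
        Real.exp (γ * ∑ t : Fin n, rew t (q t.castSucc) (acts t)))

/-- The conjugate belief `ν` (paper index `t = m+1`) with `k` steps remaining. -/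
def conjBelief [Fintype S] (γ : ℝ) (rew : ℕ → S → A → ℝ) (Ttr : ℕ → A → S → S → ℝ)
    (Oem : ℕ → O → S → ℝ) (Oref : O → ℝ) :
    ℕ → ℕ → (ℕ → A) → (ℕ → O) → S → ℝ
  | 0, _, _, _, _ => 1
  | k + 1, m, acts, obs, s =>
      (Real.exp (γ * rew m s (acts m)) / Oref (obs m)) *
        ∑ s' : S, Ttr m (acts m) s s' * Oem m (obs m) s' *
          conjBelief γ rew Ttr Oem Oref k (m + 1) acts obs s'

/-- The beta vector `β^π_{m+1}(s; f_{m+1})`, the reference-model conditional expectation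
of the conjugate belief. -/
def betaVec [Fintype S] [Fintype O] [Nonempty A] [Nonempty O]
    (γ : ℝ) (rew : ℕ → S → A → ℝ) (Ttr : ℕ → A → S → S → ℝ)
    (Oem : ℕ → O → S → ℝ) (Oref : O → ℝ) (H : ℕ)
    (π : ℕ → (ℕ → A) → (ℕ → O) → A)
    (m : ℕ) (acts : ℕ → A) (obs : ℕ → O) (s : S) : ℝ :=
  ∑ tail : Fin (H - m) → O,
    (∏ j, Oref (tail j)) *
      conjBelief γ rew Ttr Oem Oref (H - m) m
        (genAct π acts (splice obs m tail) m) (splice obs m tail) s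

/-- The raw value `∑_{o_{h+1:H+1}} (∏ O'(o_t)) ∑_s σ_{H+1}(s; f_{H+1})`, where the
history `f_{H+1}` is generated from `f_h` (index `m = h - 1`), the policy `π` and the
tail observations; the value function is `(1/γ)·ln` of this quantity. -/
def valueRaw [Fintype S] [Fintype O] [Nonempty A] [Nonempty O]
    (μ : S → ℝ) (Ttr : ℕ → A → S → S → ℝ) (Oem : ℕ → O → S → ℝ) (Oref : O → ℝ)
    (rew : ℕ → S → A → ℝ) (γ : ℝ) (H : ℕ)
    (π : ℕ → (ℕ → A) → (ℕ → O) → A)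
    (m : ℕ) (acts : ℕ → A) (obs : ℕ → O) : ℝ :=
  ∑ tail : Fin (H - m) → O,
    (∏ j, Oref (tail j)) *
      ∑ s : S, riskBelief μ Ttr Oem Oref rew γ H
        (genAct π acts (splice obs m tail) m) (splice obs m tail) s

/-!
The risk belief obeys the forward recursion
`σ_{n+1}(s') = ∑_s σ_n(s) T(s'|s) O(o|s') e^{γ r(s,a)} / O'(o)`, and the conjugate belief is
built by the adjoint backward recursion, so pairing with them is invariant along the horizon: `∑_s σ_{m+k}(s) = ⟨σ_m, ν_k⟩`. A history generated from `f_h` by the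
policy starts with `f_h`, so `σ_h(·; f_h)` factors out of the sum over the remaining
observations, and what is left is `β^π_h`.
-/

section Beliefs

variable [Fintype S] (μ : S → ℝ) (Ttr : ℕ → A → S → S → ℝ) (Oem : ℕ → O → S → ℝ)
  (Oref : O → ℝ) (rew : ℕ → S → A → ℝ) (γ : ℝ)

theorem riskBelief_congr (n : ℕ) {acts acts' : ℕ → A} {obs obs' : ℕ → O}
    (ha : ∀ t < n, acts t = acts' t) (ho : ∀ t < n, obs t = obs' t) (s : S) :
    riskBelief μ Ttr Oem Oref rew γ n acts obs s =
      riskBelief μ Ttr Oem Oref rew γ n acts' obs' s := by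
  have ha' : ∀ t : Fin n, acts t = acts' t := fun t => ha t t.isLt
  have ho' : ∀ t : Fin n, obs t = obs' t := fun t => ho t t.isLt
  simp only [riskBelief, ha', ho']

theorem riskBelief_succ (n : ℕ) (acts : ℕ → A) (obs : ℕ → O) (s' : S) :
    riskBelief μ Ttr Oem Oref rew γ (n + 1) acts obs s' =
      ∑ s : S, riskBelief μ Ttr Oem Oref rew γ n acts obs s *
        (Ttr n (acts n) s s' * (Oem n (obs n) s' / Oref (obs n)) *
          Real.exp (γ * rew n s (acts n))) := by
  unfold riskBelief
  rw [← (Fin.snocEquiv fun _ : Fin (n + 1) => S).sum_comp, Fintype.sum_prod_type]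
  refine sum_congr rfl fun s _ => ?_
  rw [sum_mul]
  refine sum_congr rfl fun p _ => ?_
  have hsnoc : (Fin.snocEquiv fun _ : Fin (n + 1) => S) (s, p) = Fin.snoc p s := rfl
  have hinit : (Fin.snoc (Fin.snoc p s : Fin (n + 1) → S) s' : Fin (n + 2) → S) 0 =
      (Fin.snoc p s : Fin (n + 1) → S) 0 :=
    Fin.snoc_castSucc (i := 0) ..
  simp only [hsnoc, Fin.prod_univ_castSucc, Fin.sum_univ_castSucc, Fin.succ_castSucc,
    Fin.snoc_castSucc, Fin.snoc_last, Fin.succ_last, Fin.val_castSucc, Fin.val_last, mul_add,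
    Real.exp_add, hinit]
  ring

theorem sum_riskBelief_add_eq_sum_mul_conjBelief (k m : ℕ) (acts : ℕ → A) (obs : ℕ → O) :
    ∑ s, riskBelief μ Ttr Oem Oref rew γ (m + k) acts obs s =
      ∑ s, riskBelief μ Ttr Oem Oref rew γ m acts obs s *
        conjBelief γ rew Ttr Oem Oref k m acts obs s := by
  induction k generalizing m with
  | zero => simp [conjBelief]
  | succ k ih =>
    rw [← add_assoc, add_right_comm, ih (m + 1)]
    simp only [riskBelief_succ, sum_mul]
    rw [sum_comm]
    refine sum_congr rfl fun s _ => ?_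
    simp only [conjBelief, mul_sum]
    refine sum_congr rfl fun s' _ => ?_
    ring

theorem sum_riskBelief_eq_of_prefix {m n : ℕ} (hmn : m ≤ n) {acts acts' : ℕ → A}
    {obs obs' : ℕ → O} (ha : ∀ t < m, acts' t = acts t) (ho : ∀ t < m, obs' t = obs t) :
    ∑ s, riskBelief μ Ttr Oem Oref rew γ n acts' obs' s =
      ∑ s, riskBelief μ Ttr Oem Oref rew γ m acts obs s *
        conjBelief γ rew Ttr Oem Oref (n - m) m acts' obs' s := by
  obtain ⟨k, rfl⟩ := Nat.exists_eq_add_of_le hmn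
  rw [Nat.add_sub_cancel_left, sum_riskBelief_add_eq_sum_mul_conjBelief]
  simp only [riskBelief_congr μ Ttr Oem Oref rew γ m ha ho]

end Beliefs

theorem genAct_of_lt [Nonempty A] [Nonempty O] (π : ℕ → (ℕ → A) → (ℕ → O) → A)
    (acts : ℕ → A) (obs : ℕ → O) {n₀ n : ℕ} (h : n < n₀) :
    genAct π acts obs n₀ n = acts n := by
  unfold genAct Nat.strongRecOn
  rw [WellFounded.fix_eq]
  simp [h]

theorem splice_of_lt [Nonempty O] (obs : ℕ → O) {m k : ℕ} (tail : Fin k → O) {t : ℕ}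
    (h : t < m) : splice obs m tail t = obs t := by
  simp [splice, h]

theorem valueRaw_eq_sum_riskBelief_mul_betaVec [Fintype S] [Fintype O] [Nonempty A]
    [Nonempty O] (μ : S → ℝ) (Ttr : ℕ → A → S → S → ℝ) (Oem : ℕ → O → S → ℝ)
    (Oref : O → ℝ) (rew : ℕ → S → A → ℝ) (γ : ℝ) (π : ℕ → (ℕ → A) → (ℕ → O) → A)
    {H m : ℕ} (hm : m ≤ H) (acts : ℕ → A) (obs : ℕ → O) :
    valueRaw μ Ttr Oem Oref rew γ H π m acts obs =
      ∑ s, riskBelief μ Ttr Oem Oref rew γ m acts obs s *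
        betaVec γ rew Ttr Oem Oref H π m acts obs s := by
  unfold valueRaw betaVec
  simp only [sum_riskBelief_eq_of_prefix μ Ttr Oem Oref rew γ hm
    (fun _ ht => genAct_of_lt π _ _ ht) (fun _ ht => splice_of_lt obs _ ht), mul_sum]
  rw [sum_comm]
  exact sum_congr rfl fun _ _ => sum_congr rfl fun _ _ => mul_left_comm _ _ _

theorem betaVec_representation_general
    [Fintype S] [Fintype O] [Nonempty O] [Nonempty A]
    (H : ℕ) (γ : ℝ)
    (μ : S → ℝ) (Ttr : ℕ → A → S → S → ℝ) (Oem : ℕ → O → S → ℝ) (Oref : O → ℝ)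
    (rew : ℕ → S → A → ℝ)
    (π : ℕ → (ℕ → A) → (ℕ → O) → A) :
    ∀ m, m ≤ H → ∀ (acts : ℕ → A) (obs : ℕ → O),
      valueRaw μ Ttr Oem Oref rew γ H π m acts obs =
        ∑ s : S, riskBelief μ Ttr Oem Oref rew γ m acts obs s *
          betaVec γ rew Ttr Oem Oref H π m acts obs s ∧
      (1 / γ) * Real.log (valueRaw μ Ttr Oem Oref rew γ H π m acts obs) =
        (1 / γ) * Real.log (∑ s : S, riskBelief μ Ttr Oem Oref rew γ m acts obs s *
          betaVec γ rew Ttr Oem Oref H π m acts obs s) := by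
  intro m hm acts obs
  have hrep := valueRaw_eq_sum_riskBelief_mul_betaVec μ Ttr Oem Oref rew γ π hm acts obs
  exact ⟨hrep, by rw [hrep]⟩

/-- Beta-vector representation of the value functions: for every step `h ∈ {1,…,H+1}`
(index `m = h - 1 ≤ H`), `∑_{o_{h+1:H+1}} (∏ O') ∑_s σ_{H+1}(s; f_{H+1})
 = ⟨σ_h(·;f_h), β^π_h(·;f_h)⟩`, and hence
`V^π_h(f_h) = (1/γ)·ln ⟨σ_h(·;f_h), β^π_h(·;f_h)⟩`. -/
theorem betaVec_representation
    [Fintype S] [Fintype O] [Fintype A] [Nonempty S] [Nonempty O] [Nonempty A]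
    (H : ℕ) (hH : 1 ≤ H) (γ : ℝ) (hγ : γ ≠ 0)
    (μ : S → ℝ) (Ttr : ℕ → A → S → S → ℝ) (Oem : ℕ → O → S → ℝ) (Oref : O → ℝ)
    (rew : ℕ → S → A → ℝ)
    (hμ0 : ∀ s, 0 ≤ μ s) (hμ1 : ∑ s, μ s = 1)
    (hT0 : ∀ h, h < H → ∀ a s s', 0 ≤ Ttr h a s s')
    (hT1 : ∀ h, h < H → ∀ a s, ∑ s', Ttr h a s s' = 1)
    (hO0 : ∀ t, t < H → ∀ o s, 0 ≤ Oem t o s)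
    (hO1 : ∀ t, t < H → ∀ s, ∑ o, Oem t o s = 1)
    (hOref0 : ∀ o, 0 < Oref o) (hOref1 : ∑ o, Oref o = 1)
    (hr : ∀ h, h < H → ∀ s a, rew h s a ∈ Set.Icc (0 : ℝ) 1)
    (π : ℕ → (ℕ → A) → (ℕ → O) → A) :
    ∀ m, m ≤ H → ∀ (acts : ℕ → A) (obs : ℕ → O),
      valueRaw μ Ttr Oem Oref rew γ H π m acts obs =
        ∑ s : S, riskBelief μ Ttr Oem Oref rew γ m acts obs s *
          betaVec γ rew Ttr Oem Oref H π m acts obs s ∧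
      (1 / γ) * Real.log (valueRaw μ Ttr Oem Oref rew γ H π m acts obs) =
        (1 / γ) * Real.log (∑ s : S, riskBelief μ Ttr Oem Oref rew γ m acts obs s *
          betaVec γ rew Ttr Oem Oref H π m acts obs s) :=
  betaVec_representation_general H γ μ Ttr Oem Oref rew π

end
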